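/- Let d be a positive squarefree integer with d ≡ 3 (mod 4). Then the family over primes p ↦ (1 − 1/p + 1/(p + χ(p))) is multipliable, each factor is positive, and the value C = ∏_{p prime} (1 − 1/p + 1/(p + χ(p))) of the infinite product is strictly positive. -/

import Mathlib

/-!
Since `|χ(p)| ≤ 1`, the factor `1 - 1/p + 1/(p + χ(p)) = 1 - χ(p)/(p (p + χ(p)))` lies within
`2/p²` of `1` and is at least `1/2`. So `∑ log` of the factors converges absolutely, and the
product is the exponential of that sum, hence positive.
-/

/-- The quadratic character attached to `ℚ(√-d)`, defined on primes:
`χ(2) = (-1)^((d²-1)/8)` and `χ(p) = (-d/p)` (Legendre symbol) for odd primes `p`;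
`0` off the primes. -/
noncomputable def chi (d : ℕ) (p : ℕ) : ℤ :=
  if hp : p.Prime then
    if p = 2 then (-1) ^ ((d ^ 2 - 1) / 8)
    else @legendreSym p ⟨hp⟩ (-(d : ℤ))
  else 0

lemma abs_chi_le_one (d p : ℕ) : |chi d p| ≤ 1 := by
  unfold chi
  split_ifs with hp
  · simp
  · have : Fact p.Prime := ⟨hp⟩
    by_cases h : ((-(d : ℤ) : ℤ) : ZMod p) = 0
    · simp [(legendreSym.eq_zero_iff p _).mpr h]
    · rcases legendreSym.eq_one_or_neg_one p h with h1 | h1 <;> simp [h1]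
  · simp

section Factor

variable {x c : ℝ}

lemma one_sub_one_div_add_one_div_add_pos (hx : 2 ≤ x) (hc : |c| ≤ 1) :
    0 < 1 - 1 / x + 1 / (x + c) := by
  have hxc : 0 < x + c := by linarith [neg_abs_le c]
  have : 1 / x ≤ 1 / 2 := one_div_le_one_div_of_le two_pos hx
  linarith [one_div_pos.mpr hxc]

lemma abs_one_sub_one_div_add_one_div_add_sub_one_le (hx : 2 ≤ x) (hc : |c| ≤ 1) :
    |1 - 1 / x + 1 / (x + c) - 1| ≤ 2 / x ^ 2 := by
  have hx0 : 0 < x := by linarith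
  have hxc : x / 2 ≤ x + c := by linarith [neg_abs_le c]
  have hxc0 : 0 < x + c := by linarith
  have hdiff : 1 - 1 / x + 1 / (x + c) - 1 = -c / ((x + c) * x) := by
    field_simp
    ring
  rw [hdiff, abs_div, abs_neg, abs_of_pos (mul_pos hxc0 hx0)]
  calc |c| / ((x + c) * x) ≤ 1 / (x / 2 * x) :=
        div_le_div₀ zero_le_one hc (by positivity) (mul_le_mul_of_nonneg_right hxc hx0.le)
    _ = 2 / x ^ 2 := by field_simp

end Factor

lemma Real.multipliable_and_tprod_pos_of_summable_sub_one {ι : Type*} {f : ι → ℝ}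
    (hpos : ∀ i, 0 < f i) (hsum : Summable fun i ↦ f i - 1) :
    Multipliable f ∧ 0 < ∏' i, f i := by
  have hlog : Summable fun i ↦ Real.log (f i) := by
    simpa using Real.summable_log_one_add_of_summable hsum
  refine ⟨Real.multipliable_of_summable_log hpos hlog, ?_⟩
  rw [← Real.rexp_tsum_eq_tprod hpos hlog]
  exact Real.exp_pos _

lemma Nat.Primes.summable_two_div_sq : Summable fun p : Nat.Primes ↦ 2 / (p : ℝ) ^ 2 := by
  have h : Summable fun n : ℕ ↦ 2 / (n : ℝ) ^ 2 := by
    simpa [div_eq_mul_inv] using (Real.summable_one_div_nat_pow.mpr one_lt_two).mul_left 2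
  exact h.comp_injective Subtype.coe_injective

theorem Cconst_positive_general (d : ℕ) :
    Multipliable (fun p : Nat.Primes =>
      (1 - 1 / (p.1 : ℝ) + 1 / ((p.1 : ℝ) + (chi d p.1 : ℝ)))) ∧
    (∀ p : Nat.Primes, 0 < 1 - 1 / (p.1 : ℝ) + 1 / ((p.1 : ℝ) + (chi d p.1 : ℝ))) ∧
    0 < ∏' p : Nat.Primes, (1 - 1 / (p.1 : ℝ) + 1 / ((p.1 : ℝ) + (chi d p.1 : ℝ))) := by
  have htwo (p : Nat.Primes) : (2 : ℝ) ≤ p.1 := mod_cast p.2.two_le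
  have hchi (p : Nat.Primes) : |(chi d p.1 : ℝ)| ≤ 1 := by
    exact_mod_cast abs_chi_le_one d p.1
  have hpos (p : Nat.Primes) := one_sub_one_div_add_one_div_add_pos (htwo p) (hchi p)
  have hsum : Summable fun p : Nat.Primes ↦
      1 - 1 / (p.1 : ℝ) + 1 / ((p.1 : ℝ) + (chi d p.1 : ℝ)) - 1 :=
    Nat.Primes.summable_two_div_sq.of_norm_bounded fun p ↦
      abs_one_sub_one_div_add_one_div_add_sub_one_le (htwo p) (hchi p)
  obtain ⟨hmul, hprod⟩ := Real.multipliable_and_tprod_pos_of_summable_sub_one hpos hsum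
  exact ⟨hmul, hpos, hprod⟩

/-- The family `p ↦ 1 - 1/p + 1/(p + χ(p))` over the primes is multipliable, each factor
is positive, and the value `C` of the infinite product is strictly positive. -/
theorem Cconst_positive (d : ℕ) (hd : 0 < d) (hsq : Squarefree d) (hmod : d % 4 = 3) :
    Multipliable (fun p : Nat.Primes =>
      (1 - 1 / (p.1 : ℝ) + 1 / ((p.1 : ℝ) + (chi d p.1 : ℝ)))) ∧
    (∀ p : Nat.Primes, 0 < 1 - 1 / (p.1 : ℝ) + 1 / ((p.1 : ℝ) + (chi d p.1 : ℝ))) ∧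
    0 < ∏' p : Nat.Primes, (1 - 1 / (p.1 : ℝ) + 1 / ((p.1 : ℝ) + (chi d p.1 : ℝ))) :=
  Cconst_positive_general d
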